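/- For the adaptive cruise control system, min_{u∈[u̲,ū]} max_{(d₁,d₂)∈[d̲₁,d̄₁]×[d̲₂,d̄₂]} L_f g₁(z,u,(d₁,d₂)) = −τa₂z₂² + (1 − τa₁)z₂ − z₁ − τa₀ + τg·u̲ + τg·d̄₂. Consequently, provided (1 − τa₁)² − 4τa₂(z₁ + τ(a₀ − g·u̲ − g·d̄₂)) ≥ 0, the points z = (z₁,z₂,z₃) with g₁(z) = 0 satisfying the ultimate tangentiality condition (this min-max equal to 0) are exactly those with z₂ = (1 − τa₁)/(2τa₂) ± √( ((1 − τa₁)/(2τa₂))² − (z₁ + τ(a₀ − g·u̲ − g·d̄₂))/(τa₂) ) and z₃ = τz₂; moreover, if z₁ + τ(a₀ − g·u̲ − g·d̄₂) ≤ 0 then the two roots z₂⁺ and z₂⁻ have opposite signs. -/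

import Mathlib

/-!
The Lie derivative of g₁ = τx₂ − x₃ is affine in (u, d₂) with slope τg > 0 and does not involve d₁,
so the inner maximum is attained at d₂ = d̄₂ and the outer minimum at u = u̲. The resulting min-max
is the concave quadratic −τa₂z₂² + (1 − τa₁)z₂ − K in z₂, with K = z₁ + τ(a₀ − g·u̲ − g·d̄₂), whose
zeros are the two roots p ± √(p² − K/(τa₂)), p = (1 − τa₁)/(2τa₂). When K ≤ 0 the radicand is at
least p², so the roots straddle 0.
-/

open Set

/-- The right-hand side of the adaptive cruise control system:
ẋ₁ = a + d₁, ẋ₂ = −(a₀ + a₁x₂ + a₂x₂²) + g·d₂ + g·u, ẋ₃ = x₁ − x₂, with g = 9.81. -/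
noncomputable def accField (a a0 a1 a2 : ℝ) (x : Fin 3 → ℝ) (u : ℝ) (d : ℝ × ℝ) :
    Fin 3 → ℝ :=
  ![a + d.1, -(a0 + a1 * x 1 + a2 * (x 1) ^ 2) + 9.81 * d.2 + 9.81 * u, x 0 - x 1]

/-- The Lie derivative L_f h(x,u,d) = Dh(x)·f(x,u,d) for the ACC vector field. -/
noncomputable def accLie (a a0 a1 a2 : ℝ) (h : (Fin 3 → ℝ) → ℝ)
    (x : Fin 3 → ℝ) (u : ℝ) (d : ℝ × ℝ) : ℝ :=
  fderiv ℝ h x (accField a a0 a1 a2 x u d)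

theorem ciSup_eq_apply_of_forall_le {ι α : Type*} [ConditionallyCompleteLattice α] {f : ι → α}
    (i₀ : ι) (h : ∀ i, f i ≤ f i₀) : ⨆ i, f i = f i₀ :=
  haveI : Nonempty ι := ⟨i₀⟩
  IsLUB.ciSup_eq (IsGreatest.isLUB ⟨⟨i₀, rfl⟩, by rintro _ ⟨i, rfl⟩; exact h i⟩)

theorem ciInf_eq_apply_of_forall_ge {ι α : Type*} [ConditionallyCompleteLattice α] {f : ι → α}
    (i₀ : ι) (h : ∀ i, f i₀ ≤ f i) : ⨅ i, f i = f i₀ :=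
  ciSup_eq_apply_of_forall_le (α := αᵒᵈ) i₀ h

theorem abs_le_sqrt_sq_sub {p q : ℝ} (hq : q ≤ 0) : |p| ≤ √(p ^ 2 - q) := by
  rw [← Real.sqrt_sq_eq_abs]
  exact Real.sqrt_le_sqrt (by linarith)

theorem neg_mul_sq_add_mul_sub_eq_zero_iff {A B K x : ℝ} (hA : A ≠ 0)
    (hdisc : 0 ≤ B ^ 2 - 4 * A * K) :
    -A * x ^ 2 + B * x - K = 0 ↔
      x = B / (2 * A) + √((B / (2 * A)) ^ 2 - K / A) ∨
        x = B / (2 * A) - √((B / (2 * A)) ^ 2 - K / A) := by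
  set p := B / (2 * A)
  set s := √(p ^ 2 - K / A)
  have hradicand : p ^ 2 - K / A = (B ^ 2 - 4 * A * K) / (4 * A ^ 2) := by
    simp only [p]; field_simp; ring
  have hs : s ^ 2 = p ^ 2 - K / A :=
    Real.sq_sqrt (hradicand ▸ div_nonneg hdisc (by positivity))
  have hfactor : -A * x ^ 2 + B * x - K = -A * ((x - (p + s)) * (x - (p - s))) := by
    have hK : K = A * (p ^ 2 - s ^ 2) := by rw [hs]; field_simp; ring
    rw [hK]; simp only [p]; field_simp; ring
  rw [hfactor, mul_eq_zero, mul_eq_zero, sub_eq_zero, sub_eq_zero]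
  simp [hA]

theorem accLie_g1 (a a0 a1 a2 τc : ℝ) (z : Fin 3 → ℝ) (u : ℝ) (d : ℝ × ℝ) :
    accLie a a0 a1 a2 (fun x => τc * x 1 - x 2) z u d =
      τc * (-(a0 + a1 * z 1 + a2 * (z 1) ^ 2) + 9.81 * d.2 + 9.81 * u) - (z 0 - z 1) := by
  have hlinear : (fun x : Fin 3 → ℝ => τc * x 1 - x 2) =
      ⇑(τc • ContinuousLinearMap.proj 1 - ContinuousLinearMap.proj 2 :
        (Fin 3 → ℝ) →L[ℝ] ℝ) := by
    ext x; simp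
  rw [accLie, hlinear, ContinuousLinearMap.fderiv]
  simp [accField]

theorem iSup_accLie_g1 (a a0 a1 a2 τc dl1 du1 dl2 du2 : ℝ) (hτc : 0 ≤ τc)
    (hd1 : dl1 ≤ du1) (hd2 : dl2 ≤ du2) (z : Fin 3 → ℝ) (u : ℝ) :
    ⨆ d : (Set.Icc dl1 du1) ×ˢ (Set.Icc dl2 du2),
        accLie a a0 a1 a2 (fun x => τc * x 1 - x 2) z u ↑d =
      τc * (-(a0 + a1 * z 1 + a2 * (z 1) ^ 2) + 9.81 * du2 + 9.81 * u) - (z 0 - z 1) := by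
  rw [ciSup_eq_apply_of_forall_le ⟨(du1, du2), ⟨⟨hd1, le_rfl⟩, ⟨hd2, le_rfl⟩⟩⟩, accLie_g1]
  rintro ⟨d, -, -, hd⟩
  simp only [accLie_g1]
  gcongr

theorem iInf_iSup_accLie_g1 (a a0 a1 a2 τc ul uu dl1 du1 dl2 du2 : ℝ) (hτc : 0 ≤ τc)
    (hu : ul ≤ uu) (hd1 : dl1 ≤ du1) (hd2 : dl2 ≤ du2) (z : Fin 3 → ℝ) :
    (⨅ u : Set.Icc ul uu, ⨆ d : (Set.Icc dl1 du1) ×ˢ (Set.Icc dl2 du2),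
        accLie a a0 a1 a2 (fun x => τc * x 1 - x 2) z ↑u ↑d) =
      -(τc * a2) * (z 1) ^ 2 + (1 - τc * a1) * z 1 - z 0 - τc * a0 +
        τc * 9.81 * ul + τc * 9.81 * du2 := by
  simp only [iSup_accLie_g1 a a0 a1 a2 τc dl1 du1 dl2 du2 hτc hd1 hd2]
  rw [ciInf_eq_apply_of_forall_ge ⟨ul, le_rfl, hu⟩]
  · ring
  rintro ⟨u, hul, -⟩
  gcongr

theorem acc_ultimate_tangentiality_g1_general
    (a a0 a1 a2 τc ul uu dl1 du1 dl2 du2 : ℝ)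
    (ha2 : 0 < a2) (hτc : 0 < τc)
    (hu : ul ≤ uu) (hd1 : dl1 ≤ du1) (hd2 : dl2 ≤ du2)
    (z : Fin 3 → ℝ) :
    -- value of the min-max of the Lie derivative of g₁
    (⨅ u : Set.Icc ul uu, ⨆ d : (Set.Icc dl1 du1) ×ˢ (Set.Icc dl2 du2),
        accLie a a0 a1 a2 (fun x => τc * x 1 - x 2) z ↑u ↑d) =
      -(τc * a2) * (z 1) ^ 2 + (1 - τc * a1) * z 1 - z 0 - τc * a0 +
        τc * 9.81 * ul + τc * 9.81 * du2 ∧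
    -- characterization of the ultimate tangentiality points on g₁ = 0
    ((1 - τc * a1) ^ 2 - 4 * τc * a2 * (z 0 + τc * (a0 - 9.81 * ul - 9.81 * du2)) ≥ 0 →
      ((τc * z 1 - z 2 = 0 ∧
          (⨅ u : Set.Icc ul uu, ⨆ d : (Set.Icc dl1 du1) ×ˢ (Set.Icc dl2 du2),
            accLie a a0 a1 a2 (fun x => τc * x 1 - x 2) z ↑u ↑d) = 0) ↔
        ((z 1 = (1 - τc * a1) / (2 * τc * a2) +
            Real.sqrt (((1 - τc * a1) / (2 * τc * a2)) ^ 2 -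
              (z 0 + τc * (a0 - 9.81 * ul - 9.81 * du2)) / (τc * a2)) ∨
          z 1 = (1 - τc * a1) / (2 * τc * a2) -
            Real.sqrt (((1 - τc * a1) / (2 * τc * a2)) ^ 2 -
              (z 0 + τc * (a0 - 9.81 * ul - 9.81 * du2)) / (τc * a2))) ∧
         z 2 = τc * z 1))) ∧
    -- opposite signs of the two roots
    (z 0 + τc * (a0 - 9.81 * ul - 9.81 * du2) ≤ 0 →
      (1 - τc * a1) / (2 * τc * a2) -
          Real.sqrt (((1 - τc * a1) / (2 * τc * a2)) ^ 2 -
            (z 0 + τc * (a0 - 9.81 * ul - 9.81 * du2)) / (τc * a2)) ≤ 0 ∧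
        0 ≤ (1 - τc * a1) / (2 * τc * a2) +
          Real.sqrt (((1 - τc * a1) / (2 * τc * a2)) ^ 2 -
            (z 0 + τc * (a0 - 9.81 * ul - 9.81 * du2)) / (τc * a2))) := by
  have hval := iInf_iSup_accLie_g1 a a0 a1 a2 τc ul uu dl1 du1 dl2 du2 hτc.le hu hd1 hd2 z
  have hA : τc * a2 ≠ 0 := (mul_pos hτc ha2).ne'
  refine ⟨hval, fun hdisc => ?_, fun hK => ?_⟩
  · have hquad : -(τc * a2) * (z 1) ^ 2 + (1 - τc * a1) * z 1 - z 0 - τc * a0 +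
        τc * 9.81 * ul + τc * 9.81 * du2 =
        -(τc * a2) * (z 1) ^ 2 + (1 - τc * a1) * z 1 -
          (z 0 + τc * (a0 - 9.81 * ul - 9.81 * du2)) := by
      ring
    have hroots := neg_mul_sq_add_mul_sub_eq_zero_iff (B := 1 - τc * a1)
      (K := z 0 + τc * (a0 - 9.81 * ul - 9.81 * du2)) (x := z 1) hA (by linarith)
    rw [← mul_assoc] at hroots
    rw [hval, hquad, hroots]
    constructor
    · rintro ⟨hg1, hroot⟩
      exact ⟨hroot, by linarith⟩
    · rintro ⟨hroot, hz2⟩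
      exact ⟨by linarith, hroot⟩
  · have hq : (z 0 + τc * (a0 - 9.81 * ul - 9.81 * du2)) / (τc * a2) ≤ 0 :=
      div_nonpos_of_nonpos_of_nonneg hK (mul_pos hτc ha2).le
    obtain ⟨hlow, hhigh⟩ :=
      abs_le.mp (abs_le_sqrt_sq_sub (p := (1 - τc * a1) / (2 * τc * a2)) hq)
    constructor <;> linarith

/-- For the ACC system, the min-max of L_f g₁ equals
−τa₂z₂² + (1 − τa₁)z₂ − z₁ − τa₀ + τg·u̲ + τg·d̄₂; if the discriminant is nonnegative,
the ultimate tangentiality points on g₁ = 0 are exactly those given by the two roots,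
with z₃ = τz₂; and if z₁ + τ(a₀ − g·u̲ − g·d̄₂) ≤ 0 the two roots have opposite signs. -/
theorem acc_ultimate_tangentiality_g1
    (a a0 a1 a2 τc Dmax ul uu dl1 du1 dl2 du2 : ℝ)
    (ha0 : 0 < a0) (ha1 : 0 < a1) (ha2 : 0 < a2) (hτc : 0 < τc) (hDmax : 0 < Dmax)
    (hu : ul ≤ uu) (hd1 : dl1 ≤ du1) (hd2 : dl2 ≤ du2)
    (z : Fin 3 → ℝ) :
    -- value of the min-max of the Lie derivative of g₁
    (⨅ u : Set.Icc ul uu, ⨆ d : (Set.Icc dl1 du1) ×ˢ (Set.Icc dl2 du2),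
        accLie a a0 a1 a2 (fun x => τc * x 1 - x 2) z ↑u ↑d) =
      -(τc * a2) * (z 1) ^ 2 + (1 - τc * a1) * z 1 - z 0 - τc * a0 +
        τc * 9.81 * ul + τc * 9.81 * du2 ∧
    -- characterization of the ultimate tangentiality points on g₁ = 0
    ((1 - τc * a1) ^ 2 - 4 * τc * a2 * (z 0 + τc * (a0 - 9.81 * ul - 9.81 * du2)) ≥ 0 →
      ((τc * z 1 - z 2 = 0 ∧
          (⨅ u : Set.Icc ul uu, ⨆ d : (Set.Icc dl1 du1) ×ˢ (Set.Icc dl2 du2),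
            accLie a a0 a1 a2 (fun x => τc * x 1 - x 2) z ↑u ↑d) = 0) ↔
        ((z 1 = (1 - τc * a1) / (2 * τc * a2) +
            Real.sqrt (((1 - τc * a1) / (2 * τc * a2)) ^ 2 -
              (z 0 + τc * (a0 - 9.81 * ul - 9.81 * du2)) / (τc * a2)) ∨
          z 1 = (1 - τc * a1) / (2 * τc * a2) -
            Real.sqrt (((1 - τc * a1) / (2 * τc * a2)) ^ 2 -
              (z 0 + τc * (a0 - 9.81 * ul - 9.81 * du2)) / (τc * a2))) ∧
         z 2 = τc * z 1))) ∧
    -- opposite signs of the two roots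
    (z 0 + τc * (a0 - 9.81 * ul - 9.81 * du2) ≤ 0 →
      (1 - τc * a1) / (2 * τc * a2) -
          Real.sqrt (((1 - τc * a1) / (2 * τc * a2)) ^ 2 -
            (z 0 + τc * (a0 - 9.81 * ul - 9.81 * du2)) / (τc * a2)) ≤ 0 ∧
        0 ≤ (1 - τc * a1) / (2 * τc * a2) +
          Real.sqrt (((1 - τc * a1) / (2 * τc * a2)) ^ 2 -
            (z 0 + τc * (a0 - 9.81 * ul - 9.81 * du2)) / (τc * a2))) :=
  acc_ultimate_tangentiality_g1_general a a0 a1 a2 τc ul uu dl1 du1 dl2 du2 ha2 hτc hu hd1 hd2 z
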